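/- arXiv:1506.01194 — 2 statements merged into one kernel-verified Lean document; each statement's English description precedes it below -/
import Mathlib

section
/- For the Erlang distribution with rate λ > 0 and integer shape α ≥ 1, whose survival function is 1 - F(x) = e^(-λx) Σ_{i=0}^{α-1} (λx)^i/i!, and any a < ξ < b, the quantity π(ξ-a)(1 - F(b-ξ))/(1 - F(b-a)) is bounded above by (λ^α (b-a)^(α-1) / ((α-1)! Σ_{i=0}^{α-1} λ^i (b-a)^i/i!)) · Σ_{i=0}^{α-1} (λ(b-a)/4)^i / i!. -/
/-!
Write `s = ξ - a`, `t = b - ξ`, so `b - a = s + t`. The exponential factors cancel in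
`π(s) S(t) / S(s + t)`, leaving `λ^α s^(α-1) T(t) / ((α-1)! T(s + t))`, where `T` is the
truncated exponential series. Termwise, `s^(α-1) t^i ≤ (s+t)^(α-1) ((s+t)/4)^i` for
`i ≤ α - 1`, because `s^(α-1) t^i = s^(α-1-i) (s t)^i` and `s t ≤ (s+t)^2 / 4`.
-/

open Finset

lemma pow_mul_pow_le_add_pow_mul_add_div_four_pow {s t : ℝ} (hs : 0 ≤ s) (ht : 0 ≤ t)
    {m i : ℕ} (him : i ≤ m) : s ^ m * t ^ i ≤ (s + t) ^ m * ((s + t) / 4) ^ i := by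
  have hst : s * t ≤ (s + t) ^ 2 / 4 := by nlinarith [sq_nonneg (s - t)]
  calc s ^ m * t ^ i = s ^ (m - i) * (s * t) ^ i := by
        rw [mul_pow, ← mul_assoc, ← pow_add, Nat.sub_add_cancel him]
    _ ≤ (s + t) ^ (m - i) * ((s + t) ^ 2 / 4) ^ i := by
        gcongr
        linarith
    _ = (s + t) ^ m * ((s + t) / 4) ^ i := by
        rw [div_pow, div_pow, ← pow_mul, mul_div_assoc', mul_div_assoc', ← pow_add, ← pow_add,
          show m - i + 2 * i = m + i by omega]

lemma pow_mul_sum_range_pow_div_factorial_le {l s t : ℝ} (hl : 0 ≤ l) (hs : 0 ≤ s)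
    (ht : 0 ≤ t) (n : ℕ) :
    s ^ (n - 1) * ∑ i ∈ range n, (l * t) ^ i / i.factorial ≤
      (s + t) ^ (n - 1) * ∑ i ∈ range n, (l * (s + t) / 4) ^ i / i.factorial := by
  rw [mul_sum, mul_sum]
  refine sum_le_sum fun i hi ↦ ?_
  have him : i ≤ n - 1 := by have := mem_range.mp hi; omega
  calc s ^ (n - 1) * ((l * t) ^ i / i.factorial)
      = l ^ i * (s ^ (n - 1) * t ^ i) / i.factorial := by ring
    _ ≤ l ^ i * ((s + t) ^ (n - 1) * ((s + t) / 4) ^ i) / i.factorial := by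
        gcongr l ^ i * ?_ / _
        exact pow_mul_pow_le_add_pow_mul_add_div_four_pow hs ht him
    _ = (s + t) ^ (n - 1) * ((l * (s + t) / 4) ^ i / i.factorial) := by
        rw [mul_div_assoc l, mul_pow]
        ring

theorem stmt_2_general (l : ℝ) (hl : 0 < l) (α : ℕ)
    (π : ℝ → ℝ)
    (hπ : ∀ x : ℝ, π x = l ^ α * x ^ (α - 1) * Real.exp (-l * x) / (α - 1).factorial)
    (S : ℝ → ℝ)
    (hS : ∀ x : ℝ, S x = Real.exp (-l * x) * ∑ i ∈ Finset.range α, (l * x) ^ i / i.factorial)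
    (a b ξ : ℝ) (h₁ : a < ξ) (h₂ : ξ < b) :
    π (ξ - a) * S (b - ξ) / S (b - a) ≤
      (l ^ α * (b - a) ^ (α - 1) /
          ((α - 1).factorial * ∑ i ∈ Finset.range α, l ^ i * (b - a) ^ i / i.factorial)) *
        ∑ i ∈ Finset.range α, (l * (b - a) / 4) ^ i / i.factorial := by
  set s := ξ - a
  set t := b - ξ
  rw [show b - a = s + t by ring, hπ, hS, hS]
  set T : ℝ → ℝ := fun x ↦ ∑ i ∈ range α, (l * x) ^ i / i.factorial
  have hexp : Real.exp (-l * (s + t)) = Real.exp (-l * s) * Real.exp (-l * t) := by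
    rw [← Real.exp_add]; ring_nf
  calc l ^ α * s ^ (α - 1) * Real.exp (-l * s) / (α - 1).factorial * (Real.exp (-l * t) * T t) /
        (Real.exp (-l * (s + t)) * T (s + t))
      = l ^ α * (s ^ (α - 1) * T t) / ((α - 1).factorial * T (s + t)) := by
        rw [hexp]
        field_simp
    _ ≤ l ^ α * ((s + t) ^ (α - 1) * ∑ i ∈ range α, (l * (s + t) / 4) ^ i / i.factorial) /
          ((α - 1).factorial * T (s + t)) := by
        gcongr l ^ α * ?_ / _
        exact pow_mul_sum_range_pow_div_factorial_le hl.le (by linarith) (by linarith) α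
    _ = _ := by simp only [T, mul_pow]; ring

theorem stmt_2 (l : ℝ) (hl : 0 < l) (α : ℕ) (hα : 1 ≤ α)
    (π : ℝ → ℝ)
    (hπ : ∀ x : ℝ, π x = l ^ α * x ^ (α - 1) * Real.exp (-l * x) / (α - 1).factorial)
    (S : ℝ → ℝ)
    (hS : ∀ x : ℝ, S x = Real.exp (-l * x) * ∑ i ∈ Finset.range α, (l * x) ^ i / i.factorial)
    (a b ξ : ℝ) (h₁ : a < ξ) (h₂ : ξ < b) :
    π (ξ - a) * S (b - ξ) / S (b - a) ≤
      (l ^ α * (b - a) ^ (α - 1) /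
          ((α - 1).factorial * ∑ i ∈ Finset.range α, l ^ i * (b - a) ^ i / i.factorial)) *
        ∑ i ∈ Finset.range α, (l * (b - a) / 4) ^ i / i.factorial :=
  stmt_2_general l hl α π hπ S hS a b ξ h₁ h₂
end

section
/- Let π be the Erlang density with rate λ > 0 and integer shape α ≥ 2, and 1-F its survival function. If λ < (α-1)/(b-a), then the function φ(ξ) = π(ξ - a)·(1 - F(b - ξ)) is monotonically increasing on the open interval (a, b). -/
/-!
Write `n + 1 = α - 1`. The exponentials in `π(ξ - a)` and `S(b - ξ)` combine to the constant
`e^{-λ(b-a)}`, so up to a positive factor `φ(ξ) = (ξ - a)^{n+1} E_{n+2}(λ(b - ξ))`, where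
`E_m(t) = ∑_{i<m} tⁱ/i!`. Since `E_{m+1}' = E_m`, its derivative is
`(ξ - a)ⁿ ((n + 1) E_{n+2} - λ(ξ - a) E_{n+1})`, which is nonnegative because
`E_{n+2} ≥ E_{n+1} ≥ 0` and `λ(ξ - a) ≤ λ(b - a) < n + 1`.
-/

open Finset

noncomputable def expPartialSum (n : ℕ) (t : ℝ) : ℝ :=
  ∑ i ∈ range n, t ^ i / i.factorial

lemma hasDerivAt_expPartialSum_succ (n : ℕ) (t : ℝ) :
    HasDerivAt (expPartialSum (n + 1)) (expPartialSum n t) t := by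
  induction n with
  | zero =>
    have hone : expPartialSum 1 = fun _ => 1 := funext fun _ => by simp [expPartialSum]
    simpa [hone, expPartialSum] using hasDerivAt_const t (1 : ℝ)
  | succ n ih =>
    have hlast : HasDerivAt (fun t : ℝ => t ^ (n + 1) / (n + 1).factorial)
        (t ^ n / n.factorial) t := by
      refine ((hasDerivAt_pow (n + 1) t).div_const _).congr_deriv ?_
      rw [Nat.factorial_succ, Nat.add_sub_cancel]
      push_cast
      field_simp
    unfold expPartialSum at ih ⊢
    simp only [sum_range_succ _ (n + 1), sum_range_succ _ n] at ih ⊢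
    exact ih.add hlast

lemma expPartialSum_nonneg {t : ℝ} (ht : 0 ≤ t) (n : ℕ) : 0 ≤ expPartialSum n t :=
  sum_nonneg fun _ _ => by positivity

lemma expPartialSum_le_succ {t : ℝ} (ht : 0 ≤ t) (n : ℕ) :
    expPartialSum n t ≤ expPartialSum (n + 1) t := by
  rw [expPartialSum, expPartialSum, sum_range_succ]
  exact le_add_of_nonneg_right (by positivity)

lemma hasDerivAt_sub_pow_mul_expPartialSum (l a b : ℝ) (n : ℕ) (ξ : ℝ) :
    HasDerivAt (fun ξ => (ξ - a) ^ (n + 1) * expPartialSum (n + 2) (l * (b - ξ)))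
      ((ξ - a) ^ n * ((n + 1) * expPartialSum (n + 2) (l * (b - ξ))
        - l * (ξ - a) * expPartialSum (n + 1) (l * (b - ξ)))) ξ := by
  have hpow : HasDerivAt (fun ξ : ℝ => (ξ - a) ^ (n + 1)) ((n + 1) * (ξ - a) ^ n) ξ := by
    simpa using ((hasDerivAt_id ξ).sub_const a).fun_pow (n + 1)
  have hinner : HasDerivAt (fun ξ : ℝ => l * (b - ξ)) (-l) ξ := by
    simpa using ((hasDerivAt_id ξ).const_sub b).const_mul l
  have hsum := (hasDerivAt_expPartialSum_succ (n + 1) _).comp ξ hinner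
  exact (hpow.mul hsum).congr_deriv (by simp only [Function.comp_apply]; ring)

lemma monotoneOn_sub_pow_mul_expPartialSum {l a b : ℝ} (hl : 0 ≤ l) (n : ℕ)
    (hrate : l * (b - a) ≤ n + 1) :
    MonotoneOn (fun ξ => (ξ - a) ^ (n + 1) * expPartialSum (n + 2) (l * (b - ξ)))
      (Set.Ioo a b) := by
  have hderiv := hasDerivAt_sub_pow_mul_expPartialSum l a b n
  refine monotoneOn_of_hasDerivWithinAt_nonneg (convex_Ioo a b)
    (fun ξ _ => (hderiv ξ).continuousAt.continuousWithinAt)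
    (fun ξ _ => (hderiv ξ).hasDerivWithinAt) ?_
  rw [interior_Ioo]
  rintro ξ ⟨haξ, hξb⟩
  have ht : 0 ≤ l * (b - ξ) := mul_nonneg hl (by linarith)
  have hlξ : l * (ξ - a) ≤ n + 1 := by nlinarith
  refine mul_nonneg (pow_nonneg (by linarith) n) (sub_nonneg.mpr ?_)
  calc l * (ξ - a) * expPartialSum (n + 1) (l * (b - ξ))
      ≤ (n + 1) * expPartialSum (n + 1) (l * (b - ξ)) :=
        mul_le_mul_of_nonneg_right hlξ (expPartialSum_nonneg ht _)
    _ ≤ (n + 1) * expPartialSum (n + 2) (l * (b - ξ)) :=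
        mul_le_mul_of_nonneg_left (expPartialSum_le_succ ht _) (by positivity)

theorem stmt_3 (l : ℝ) (hl : 0 < l) (α : ℕ) (hα : 2 ≤ α)
    (π : ℝ → ℝ)
    (hπ : ∀ x : ℝ, π x = l ^ α * x ^ (α - 1) * Real.exp (-l * x) / (α - 1).factorial)
    (S : ℝ → ℝ)
    (hS : ∀ x : ℝ, S x = Real.exp (-l * x) * ∑ i ∈ Finset.range α, (l * x) ^ i / i.factorial)
    (a b : ℝ) (hab : a < b) (hrate : l < ((α : ℝ) - 1) / (b - a)) :
    MonotoneOn (fun ξ : ℝ => π (ξ - a) * S (b - ξ)) (Set.Ioo a b) := by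
  obtain ⟨n, rfl⟩ : ∃ n, α = n + 2 := ⟨α - 2, by omega⟩
  have hrate' : l * (b - a) ≤ n + 1 := by
    rw [lt_div_iff₀ (sub_pos.mpr hab)] at hrate
    push_cast at hrate
    linarith
  set K := l ^ (n + 2) * Real.exp (-l * (b - a)) / (n + 1).factorial
  have hK : 0 ≤ K := by positivity
  have hφ : ∀ ξ, π (ξ - a) * S (b - ξ) =
      K * ((ξ - a) ^ (n + 1) * expPartialSum (n + 2) (l * (b - ξ))) := by
    intro ξ
    have hexp : Real.exp (-l * (ξ - a)) * Real.exp (-l * (b - ξ)) = Real.exp (-l * (b - a)) := by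
      rw [← Real.exp_add]; ring_nf
    simp only [hπ, hS, K, expPartialSum, ← hexp, Nat.add_succ_sub_one]
    ring
  intro x hx y hy hxy
  simp only [hφ]
  exact mul_le_mul_of_nonneg_left
    (monotoneOn_sub_pow_mul_expPartialSum hl.le n hrate' hx hy hxy) hK
end
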